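/- Let ν be the measure on the punctured unit disk of ℝ² given in polar coordinates by ν(dρ, dθ) = ρ⁻² 𝟙_{(0,1)}(ρ) dρ dθ. Then for r > 0, letting h_{1/r}(x) = x/r and I be inversion in the unit circle, the pushforward of the measure 𝟙_{(r,∞)}(ρ) dρ dθ on {‖x‖ > r} under I ∘ h_{1/r} equals r · ν. -/

import Mathlib

open MeasureTheory

noncomputable def planeInversion (x : EuclideanSpace ℝ (Fin 2)) : EuclideanSpace ℝ (Fin 2) :=
  (‖x‖ ^ 2)⁻¹ • x

/-- The measure with polar density `ρ⁻² 𝟙_{(0,1)}(ρ) dρ dθ` on the punctured unit disk,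
i.e. with density `‖x‖⁻³` with respect to planar Lebesgue measure on the punctured disk. -/
noncomputable def nuPolarSquared : Measure (EuclideanSpace ℝ (Fin 2)) :=
  (volume.restrict {x : EuclideanSpace ℝ (Fin 2) | 0 < ‖x‖ ∧ ‖x‖ < 1}).withDensity
    fun x => ENNReal.ofReal (‖x‖ ^ 3)⁻¹

open EuclideanGeometry Module Set ENNReal

lemma map_withDensity_comp {α β : Type*} [MeasurableSpace α] [MeasurableSpace β]
    (μ : Measure α) {f : α → β} (hf : Measurable f) {g : β → ℝ≥0∞} (hg : Measurable g) :
    Measure.map f (μ.withDensity (g ∘ f)) = (Measure.map f μ).withDensity g := by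
  ext A hA
  rw [Measure.map_apply hf hA, withDensity_apply _ (hf hA), withDensity_apply _ hA,
    setLIntegral_map hA hg hf]
  rfl

/-- The pushforward under `I ∘ h_{1/r}` of the measure with polar density
`𝟙_{(r,∞)}(ρ) dρ dθ` (density `‖x‖⁻¹` w.r.t. Lebesgue measure on `{‖x‖ > r}`)
equals `r · ν`. -/
theorem pushforward_of_line_process_intensity (r : ℝ) (hr : 0 < r) :
    Measure.map (fun x : EuclideanSpace ℝ (Fin 2) => planeInversion (r⁻¹ • x))
        ((volume.restrict {x : EuclideanSpace ℝ (Fin 2) | r < ‖x‖}).withDensity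
          fun x => ENNReal.ofReal ‖x‖⁻¹)
      = ENNReal.ofReal r • nuPolarSquared := by
  classical
  set T : EuclideanSpace ℝ (Fin 2) → EuclideanSpace ℝ (Fin 2) :=
    fun x => planeInversion (r⁻¹ • x) with hTdef
  have hTapp : ∀ x : EuclideanSpace ℝ (Fin 2), T x = (r / ‖x‖ ^ 2) • x := by
    intro x
    by_cases hx : x = 0
    · simp [hx, hTdef, planeInversion]
    · have hnx : ‖x‖ ≠ 0 := norm_ne_zero_iff.2 hx
      simp only [hTdef, planeInversion, norm_smul, Real.norm_eq_abs,
        abs_of_pos (inv_pos.2 hr), smul_smul]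
      congr 1
      field_simp
  have hTinv : T = inversion (0 : EuclideanSpace ℝ (Fin 2)) (Real.sqrt r) := by
    funext x
    rw [hTapp]
    simp [inversion, dist_zero_right, div_pow, Real.sq_sqrt hr.le]
  have hTnorm : ∀ x : EuclideanSpace ℝ (Fin 2), ‖T x‖ = r / ‖x‖ := by
    intro x
    by_cases hx : x = 0
    · simp [hx, hTapp]
    · have hnx : 0 < ‖x‖ := norm_pos_iff.2 hx
      rw [hTapp, norm_smul, Real.norm_eq_abs,
        abs_of_pos (by positivity : (0:ℝ) < r / ‖x‖ ^ 2)]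
      field_simp
  have hTT : ∀ x : EuclideanSpace ℝ (Fin 2), x ≠ 0 → T (T x) = x := by
    intro x hx
    have hnx : 0 < ‖x‖ := norm_pos_iff.2 hx
    rw [hTapp (T x), hTnorm, hTapp, smul_smul]
    rw [show r / (r / ‖x‖) ^ 2 * (r / ‖x‖ ^ 2) = 1 by field_simp, one_smul]
  set s : Set (EuclideanSpace ℝ (Fin 2)) := {x | r < ‖x‖} with hsdef
  set u : Set (EuclideanSpace ℝ (Fin 2)) := {x | 0 < ‖x‖ ∧ ‖x‖ < 1} with hudef
  have hs : MeasurableSet s := (isOpen_lt continuous_const continuous_norm).measurableSet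
  have hsne : ∀ x ∈ s, x ≠ 0 := fun x hx => norm_pos_iff.1 (hr.trans hx)
  set f' : EuclideanSpace ℝ (Fin 2) → (EuclideanSpace ℝ (Fin 2) →L[ℝ] EuclideanSpace ℝ (Fin 2)) :=
    fun x => (r / ‖x‖ ^ 2) •
      (Submodule.reflection (ℝ ∙ x)ᗮ : EuclideanSpace ℝ (Fin 2) →L[ℝ] EuclideanSpace ℝ (Fin 2)) with hf'def
  have hf' : ∀ x ∈ s, HasFDerivWithinAt T (f' x) s x := by
    intro x hx
    have h := hasFDerivAt_inversion (c := (0 : EuclideanSpace ℝ (Fin 2)))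
      (R := Real.sqrt r) (hsne x hx)
    rw [hTinv]
    refine (HasFDerivAt.hasFDerivWithinAt ?_)
    exact h.congr_fderiv (by simp [hf'def, dist_zero_right, div_pow, Real.sq_sqrt hr.le])
  have hdet : ∀ x : EuclideanSpace ℝ (Fin 2), x ≠ 0 →
      (f' x).det = -((r / ‖x‖ ^ 2) ^ 2) := by
    intro x hx
    have h1 : finrank ℝ ((ℝ ∙ x)ᗮ)ᗮ = 1 := by
      rw [Submodule.orthogonal_orthogonal, finrank_span_singleton hx]
    have h2 : LinearMap.det
        (((Submodule.reflection (ℝ ∙ x)ᗮ : EuclideanSpace ℝ (Fin 2) →L[ℝ] EuclideanSpace ℝ (Fin 2))) :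
          EuclideanSpace ℝ (Fin 2) →ₗ[ℝ] EuclideanSpace ℝ (Fin 2)) = (-1 : ℝ) := by
      show LinearMap.det (Submodule.reflection (ℝ ∙ x)ᗮ).toLinearMap = (-1 : ℝ)
      rw [Submodule.det_reflection, h1, pow_one]
    simp [hf'def, ContinuousLinearMap.det, LinearMap.det_smul, h2, finrank_euclideanSpace_fin]
    exact (congrArg (fun d => (r / ‖x‖ ^ 2) ^ 2 * d) h2).trans (by ring)
  have hdet0 : ∀ x : EuclideanSpace ℝ (Fin 2),
      ENNReal.ofReal |(f' x).det| = ENNReal.ofReal ((r / ‖x‖ ^ 2) ^ 2) := by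
    intro x
    by_cases hx : x = 0
    · subst hx
      have h0 : (f' (0 : EuclideanSpace ℝ (Fin 2))).det = 0 := by
        simp [hf'def, ContinuousLinearMap.det, LinearMap.det_smul, finrank_euclideanSpace_fin]
      simp [h0]
    · rw [hdet x hx, abs_neg, abs_of_nonneg (by positivity)]
  have hinj : Set.InjOn T s := fun x hx y hy h => by
    rw [← hTT x (hsne x hx), ← hTT y (hsne y hy), h]
  have himg : T '' s = u := by
    ext y
    constructor
    · rintro ⟨x, hx, rfl⟩
      have hnx : 0 < ‖x‖ := hr.trans hx
      refine ⟨?_, ?_⟩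
      · rw [hTnorm]; positivity
      · rw [hTnorm, div_lt_one hnx]; exact hx
    · rintro ⟨hy0, hy1⟩
      have hy : y ≠ 0 := norm_pos_iff.1 hy0
      refine ⟨T y, ?_, hTT y hy⟩
      show r < ‖T y‖
      rw [hTnorm y]
      calc r = r / 1 := (div_one r).symm
        _ < r / ‖y‖ := div_lt_div_of_pos_left hr hy0 hy1
  have hTm : Measurable T := by
    have h : T = fun x : EuclideanSpace ℝ (Fin 2) => (r / ‖x‖ ^ 2) • x := funext hTapp
    rw [h]
    exact (measurable_const.div (measurable_norm.pow_const 2)).smul measurable_id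
  set g : EuclideanSpace ℝ (Fin 2) → ℝ≥0∞ :=
    fun y => ENNReal.ofReal (r * (‖y‖ ^ 3)⁻¹) with hgdef
  have hgm : Measurable g :=
    (measurable_const.mul ((measurable_norm.pow_const 3).inv)).ennreal_ofReal
  set D1 : EuclideanSpace ℝ (Fin 2) → ℝ≥0∞ :=
    fun x => ENNReal.ofReal ((r / ‖x‖ ^ 2) ^ 2) with hD1def
  have hD1m : Measurable D1 :=
    ((measurable_const.div (measurable_norm.pow_const 2)).pow_const 2).ennreal_ofReal
  have hae : (volume.restrict s).withDensity (fun x => ENNReal.ofReal ‖x‖⁻¹)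
      = (volume.restrict s).withDensity (D1 * (g ∘ T)) := by
    refine withDensity_congr_ae ((ae_restrict_iff' hs).2 (Filter.Eventually.of_forall ?_))
    intro x hx
    have hnx : 0 < ‖x‖ := hr.trans hx
    show ENNReal.ofReal ‖x‖⁻¹
        = ENNReal.ofReal ((r / ‖x‖ ^ 2) ^ 2) * ENNReal.ofReal (r * (‖T x‖ ^ 3)⁻¹)
    rw [hTnorm, ← ENNReal.ofReal_mul (by positivity)]
    congr 1
    field_simp
  rw [hae, withDensity_mul _ hD1m (hgm.comp hTm), map_withDensity_comp _ hTm hgm]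
  have hjac : Measure.map T ((volume.restrict s).withDensity D1) = volume.restrict (T '' s) := by
    have h : D1 = fun x => ENNReal.ofReal |(f' x).det| := funext fun x => (hdet0 x).symm
    rw [h]
    exact map_withDensity_abs_det_fderiv_eq_addHaar volume hs.nullMeasurableSet hf' hinj
  rw [hjac, himg]
  have hg2 : g = (ENNReal.ofReal r) •
      (fun y : EuclideanSpace ℝ (Fin 2) => ENNReal.ofReal (‖y‖ ^ 3)⁻¹) := by
    funext y
    simp [hgdef, ENNReal.ofReal_mul hr.le]
  rw [hg2, withDensity_smul _ (show Measurable fun y : EuclideanSpace ℝ (Fin 2) => ENNReal.ofReal (‖y‖ ^ 3)⁻¹ from (measurable_norm.pow_const 3).inv.ennreal_ofReal)]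
  rfl
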